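/- arXiv:1609.03624 — 2 statements merged into one kernel-verified Lean document; each statement's English description precedes it below -/
import Mathlib

section
/- Let R be a reduced root system in a real vector space V with the Aut(R)-invariant inner product normalized so that short roots in each irreducible component have square-length 1. Then there is a unique R-linear map φ: V* → V such that φ(α∨) = α for all coroots α∨ that are short (in the dual root system R∨). -/
open Module

/-- A reduced root system `R` in a real vector space `V`, together with the
`Aut(R)`-invariant inner products on `V` and on `V* = Dual ℝ V`. -/
structure RootSystemData (V : Type) [AddCommGroup V] [Module ℝ V] : Type where
  /-- the (finite) set of roots -/
  roots : Finset V
  /-- the coroot `α∨ ∈ V*` attached to a root `α` -/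
  coroot : V → Module.Dual ℝ V
  span_eq_top : Submodule.span ℝ (roots : Set V) = ⊤
  root_ne_zero : ∀ α ∈ roots, α ≠ (0 : V)
  coroot_self : ∀ α ∈ roots, coroot α α = 2
  reflect_mem : ∀ α ∈ roots, ∀ β ∈ roots, β - coroot α β • α ∈ roots
  crystallographic : ∀ α ∈ roots, ∀ β ∈ roots, ∃ n : ℤ, coroot α β = (n : ℝ)
  reduced : ∀ α ∈ roots, ∀ t : ℝ, t • α ∈ roots → t = 1 ∨ t = -1
  /-- the `Aut(R)`-invariant inner product on `V` -/
  B : V →ₗ[ℝ] V →ₗ[ℝ] ℝ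
  B_symm : ∀ x y, B x y = B y x
  B_pos : ∀ x, x ≠ 0 → 0 < B x x
  B_invariant : ∀ σ : V ≃ₗ[ℝ] V, (∀ α ∈ roots, σ α ∈ roots) →
    ∀ α ∈ roots, ∀ β ∈ roots, B (σ α) (σ β) = B α β
  coroot_eq : ∀ α ∈ roots, ∀ x : V, coroot α x = 2 * B α x / B α α
  /-- the `Aut(R)`-invariant inner product on `V*` (for the dual root system `R∨`) -/
  Bd : Module.Dual ℝ V →ₗ[ℝ] Module.Dual ℝ V →ₗ[ℝ] ℝ
  Bd_symm : ∀ x y, Bd x y = Bd y x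
  Bd_pos : ∀ x, x ≠ 0 → 0 < Bd x x
  /-- the coroot of `α∨` in the dual root system `R∨` is evaluation at `α` -/
  dual_coroot_eq : ∀ α ∈ roots, ∀ y : Module.Dual ℝ V,
    y α = 2 * Bd (coroot α) y / Bd (coroot α) (coroot α)

namespace RootSystemData

variable {V : Type} [AddCommGroup V] [Module ℝ V] (D : RootSystemData V)

/-- `x` and `y` lie in the same irreducible component of the root system. -/
def SameComponent (x y : V) : Prop :=
  Relation.ReflTransGen (fun a b => a ∈ D.roots ∧ b ∈ D.roots ∧ D.B a b ≠ 0) x y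

/-- `R` is irreducible. -/
def IsIrreducible : Prop :=
  D.roots.Nonempty ∧ ∀ α ∈ D.roots, ∀ β ∈ D.roots, D.SameComponent α β

/-- `R` is simply laced: all roots have the same length. -/
def IsSimplyLaced : Prop := ∀ α ∈ D.roots, ∀ β ∈ D.roots, D.B α α = D.B β β

/-- `α` is a root that is short within its irreducible component. -/
def ShortRoot (α : V) : Prop :=
  α ∈ D.roots ∧ ∀ β ∈ D.roots, D.SameComponent α β → D.B α α ≤ D.B β β

/-- `α∨` is a coroot that is short within its irreducible component of `R∨`
(equivalently, `α` is a long root of its component). -/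
def ShortCoroot (α : V) : Prop :=
  α ∈ D.roots ∧ ∀ β ∈ D.roots, D.SameComponent α β →
    D.Bd (D.coroot α) (D.coroot α) ≤ D.Bd (D.coroot β) (D.coroot β)

/-- normalization: short roots in every irreducible component have square-length `1`. -/
def NormalizedPrimal : Prop := ∀ α, D.ShortRoot α → D.B α α = 1

/-- normalization: short coroots in every irreducible component have square-length `1`. -/
def NormalizedDual : Prop := ∀ α, D.ShortCoroot α → D.Bd (D.coroot α) (D.coroot α) = 1

/-- the weight lattice `Λ_w ⊆ V`. -/
def weightLattice : Set V := {x | ∀ α ∈ D.roots, ∃ n : ℤ, D.coroot α x = (n : ℝ)}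

/-- the root lattice `Λ_r ⊆ V`. -/
def rootLattice : AddSubgroup V := AddSubgroup.closure (D.roots : Set V)

/-- the coweight lattice `Λ_w∨ ⊆ V*`. -/
def coweightLattice : Set (Module.Dual ℝ V) := {x | ∀ α ∈ D.roots, ∃ n : ℤ, x α = (n : ℝ)}

/-- the coroot lattice `Λ_r∨ ⊆ V*`. -/
def corootLattice : AddSubgroup (Module.Dual ℝ V) :=
  AddSubgroup.closure (D.coroot '' (D.roots : Set V))

end RootSystemData

/-!
The map `y ↦ 2 Bd(y, ·)`, read in `V ≅ V**`, sends each coroot `α∨` to `Bd(α∨, α∨) • α`,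
because `Bd(α∨, ·)` is `Bd(α∨, α∨) / 2` times evaluation at `α`; with the dual normalization
it sends short coroots to their roots.

Uniqueness amounts to the short coroots spanning `V*`. The quantity `Bd(α∨, α∨) B(α, α)` is
constant on irreducible components, so the reflections `s_δ`, which preserve `B`, permute the
short coroots. Hence the common kernel `K` of the short coroots is `s_δ`-stable, and
`x - s_δ x = δ∨(x) δ` shows that `δ ∈ K` as soon as `δ∨(x) ≠ 0` for some `x ∈ K`. Moving along
the component of `δ`, this reaches a root `β` with `β∨` short, contradicting `β∨(β) = 2`.
-/

namespace RootSystemData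

variable {V : Type} [AddCommGroup V] [Module ℝ V] (D : RootSystemData V)

lemma B_self_pos {α : V} (hα : α ∈ D.roots) : 0 < D.B α α :=
  D.B_pos α (D.root_ne_zero α hα)

lemma coroot_ne_zero {α : V} (hα : α ∈ D.roots) : D.coroot α ≠ 0 := fun h => by
  simpa [h] using D.coroot_self α hα

lemma Bd_coroot_self_pos {α : V} (hα : α ∈ D.roots) : 0 < D.Bd (D.coroot α) (D.coroot α) :=
  D.Bd_pos _ (D.coroot_ne_zero hα)

lemma coroot_apply_mul_B_self {α : V} (hα : α ∈ D.roots) (x : V) :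
    D.coroot α x * D.B α α = 2 * D.B α x := by
  rw [D.coroot_eq α hα, div_mul_cancel₀ _ (D.B_self_pos hα).ne']

lemma apply_root_mul_Bd_coroot_self {α : V} (hα : α ∈ D.roots) (y : Module.Dual ℝ V) :
    y α * D.Bd (D.coroot α) (D.coroot α) = 2 * D.Bd (D.coroot α) y := by
  rw [D.dual_coroot_eq α hα, div_mul_cancel₀ _ (D.Bd_coroot_self_pos hα).ne']

lemma coroot_apply_eq_zero_iff {α : V} (hα : α ∈ D.roots) {x : V} :
    D.coroot α x = 0 ↔ D.B α x = 0 := by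
  rw [D.coroot_eq α hα, div_eq_zero_iff, mul_eq_zero]
  simp [(D.B_self_pos hα).ne']

lemma exists_coroot_apply_ne_zero {x : V} (hx : x ≠ 0) :
    ∃ γ ∈ D.roots, D.coroot γ x ≠ 0 := by
  by_contra! h
  have hflip : D.B.flip x = 0 := LinearMap.ext_on D.span_eq_top fun γ hγ => by
    simpa [D.B_symm x γ] using (D.coroot_apply_eq_zero_iff hγ).1 (h γ hγ)
  exact (D.B_pos x hx).ne' (by simpa using LinearMap.congr_fun hflip x)

lemma sameComponent_symm {x y : V} (h : D.SameComponent x y) : D.SameComponent y x := by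
  induction h with
  | refl => exact .refl
  | tail _ hbc ih => exact .head ⟨hbc.2.1, hbc.1, by rw [D.B_symm]; exact hbc.2.2⟩ ih

lemma Bd_mul_B_eq_of_B_ne_zero {α β : V} (hα : α ∈ D.roots) (hβ : β ∈ D.roots)
    (hαβ : D.B α β ≠ 0) :
    D.Bd (D.coroot α) (D.coroot α) * D.B α α
      = D.Bd (D.coroot β) (D.coroot β) * D.B β β := by
  have hdual : D.coroot β α * D.Bd (D.coroot α) (D.coroot α)
      = D.coroot α β * D.Bd (D.coroot β) (D.coroot β) := by
    rw [D.apply_root_mul_Bd_coroot_self hα, D.apply_root_mul_Bd_coroot_self hβ, D.Bd_symm]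
  have hprimal : D.coroot α β * D.B α α = D.coroot β α * D.B β β := by
    rw [D.coroot_apply_mul_B_self hα, D.coroot_apply_mul_B_self hβ, D.B_symm]
  have hαβ' : D.coroot α β ≠ 0 := (D.coroot_apply_eq_zero_iff hα).not.2 hαβ
  have hβα' : D.coroot β α ≠ 0 := (D.coroot_apply_eq_zero_iff hβ).not.2 (by rwa [D.B_symm])
  refine mul_left_cancel₀ (mul_ne_zero hβα' hαβ') ?_
  linear_combination (D.coroot α β * D.B α α) * hdual
    + (D.coroot α β * D.Bd (D.coroot β) (D.coroot β)) * hprimal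

lemma Bd_mul_B_eq_of_sameComponent {α β : V} (h : D.SameComponent α β) :
    D.Bd (D.coroot α) (D.coroot α) * D.B α α
      = D.Bd (D.coroot β) (D.coroot β) * D.B β β := by
  induction h with
  | refl => rfl
  | tail _ hbc ih => exact ih.trans (D.Bd_mul_B_eq_of_B_ne_zero hbc.1 hbc.2.1 hbc.2.2)

lemma exists_shortCoroot_sameComponent {γ : V} (hγ : γ ∈ D.roots) :
    ∃ β, D.ShortCoroot β ∧ D.SameComponent γ β := by
  classical
  obtain ⟨β, hβ, hmax⟩ := (D.roots.filter (D.SameComponent γ)).exists_max_image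
    (fun δ => D.B δ δ) ⟨γ, Finset.mem_filter.2 ⟨hγ, .refl⟩⟩
  rw [Finset.mem_filter] at hβ
  refine ⟨β, ⟨hβ.1, fun ζ hζ hβζ => ?_⟩, hβ.2⟩
  have hle : D.B ζ ζ ≤ D.B β β := hmax ζ (Finset.mem_filter.2 ⟨hζ, hβ.2.trans hβζ⟩)
  nlinarith [D.Bd_mul_B_eq_of_sameComponent hβζ, D.Bd_coroot_self_pos hβ.1,
    D.Bd_coroot_self_pos hζ, D.B_self_pos hζ]

lemma B_map_map_of_mapsTo (σ : V ≃ₗ[ℝ] V) (hσ : ∀ α ∈ D.roots, σ α ∈ D.roots)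
    (u v : V) :
    D.B (σ u) (σ v) = D.B u v := by
  have h : D.B.compl₁₂ σ.toLinearMap σ.toLinearMap = D.B :=
    LinearMap.ext_on D.span_eq_top fun α hα => LinearMap.ext_on D.span_eq_top fun β hβ => by
      simpa using D.B_invariant σ hσ α hα β hβ
  exact LinearMap.congr_fun₂ h u v

noncomputable def rootReflection {δ : V} (hδ : δ ∈ D.roots) : V ≃ₗ[ℝ] V :=
  Module.reflection (D.coroot_self δ hδ)

lemma rootReflection_apply {δ : V} (hδ : δ ∈ D.roots) (x : V) :
    D.rootReflection hδ x = x - D.coroot δ x • δ :=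
  Module.reflection_apply x (D.coroot_self δ hδ)

lemma rootReflection_rootReflection {δ : V} (hδ : δ ∈ D.roots) (x : V) :
    D.rootReflection hδ (D.rootReflection hδ x) = x :=
  Module.involutive_reflection (D.coroot_self δ hδ) x

lemma rootReflection_mem {δ : V} (hδ : δ ∈ D.roots) {β : V} (hβ : β ∈ D.roots) :
    D.rootReflection hδ β ∈ D.roots := by
  rw [D.rootReflection_apply hδ]
  exact D.reflect_mem δ hδ β hβ

lemma B_rootReflection {δ : V} (hδ : δ ∈ D.roots) (u v : V) :
    D.B (D.rootReflection hδ u) (D.rootReflection hδ v) = D.B u v :=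
  D.B_map_map_of_mapsTo _ (fun _ => D.rootReflection_mem hδ) u v

lemma coroot_rootReflection {δ : V} (hδ : δ ∈ D.roots) {β : V} (hβ : β ∈ D.roots)
    (x : V) :
    D.coroot (D.rootReflection hδ β) x = D.coroot β (D.rootReflection hδ x) := by
  have hx : D.B (D.rootReflection hδ β) x = D.B β (D.rootReflection hδ x) := by
    rw [← D.B_rootReflection hδ β, D.rootReflection_rootReflection]
  rw [D.coroot_eq _ (D.rootReflection_mem hδ hβ), D.coroot_eq β hβ, D.B_rootReflection, hx]

lemma sameComponent_rootReflection {δ : V} (hδ : δ ∈ D.roots) {β : V} (hβ : β ∈ D.roots) :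
    D.SameComponent β (D.rootReflection hδ β) := by
  by_cases hδβ : D.B δ β = 0
  · rw [D.rootReflection_apply hδ, (D.coroot_apply_eq_zero_iff hδ).2 hδβ, zero_smul, sub_zero]
    exact .refl
  · have hδsβ : D.B δ (D.rootReflection hδ β) = -D.B δ β := by
      rw [← D.B_rootReflection hδ δ, D.rootReflection_rootReflection,
        D.rootReflection_apply hδ δ, D.coroot_self δ hδ, two_smul, sub_add_cancel_left, map_neg,
        LinearMap.neg_apply]
    refine .head ⟨hβ, hδ, by rwa [D.B_symm]⟩
      (.single ⟨hδ, D.rootReflection_mem hδ hβ, ?_⟩)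
    rwa [hδsβ, neg_ne_zero]

lemma shortCoroot_rootReflection {δ : V} (hδ : δ ∈ D.roots) {β : V} (hβ : D.ShortCoroot β) :
    D.ShortCoroot (D.rootReflection hδ β) := by
  have hβsβ := D.sameComponent_rootReflection hδ hβ.1
  have hBd : D.Bd (D.coroot (D.rootReflection hδ β)) (D.coroot (D.rootReflection hδ β))
      = D.Bd (D.coroot β) (D.coroot β) := by
    have h := D.Bd_mul_B_eq_of_sameComponent (D.sameComponent_symm hβsβ)
    rw [D.B_rootReflection] at h
    exact mul_right_cancel₀ (D.B_self_pos hβ.1).ne' h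
  refine ⟨D.rootReflection_mem hδ hβ.1, fun γ hγ hsβγ => ?_⟩
  rw [hBd]
  exact hβ.2 γ hγ (hβsβ.trans hsβγ)

def shortCorootKernel : Set V := {x | ∀ α, D.ShortCoroot α → D.coroot α x = 0}

lemma root_mem_shortCorootKernel {δ : V} (hδ : δ ∈ D.roots) {x : V}
    (hx : x ∈ D.shortCorootKernel) (hδx : D.coroot δ x ≠ 0) : δ ∈ D.shortCorootKernel := by
  intro β hβ
  have h : D.coroot β (D.rootReflection hδ x) = 0 := by
    rw [← D.coroot_rootReflection hδ hβ.1]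
    exact hx _ (D.shortCoroot_rootReflection hδ hβ)
  rw [D.rootReflection_apply hδ, map_sub, map_smul, hx β hβ, smul_eq_mul, zero_sub,
    neg_eq_zero] at h
  exact (mul_eq_zero.1 h).resolve_left hδx

lemma mem_shortCorootKernel_of_sameComponent {γ β : V} (hγ : γ ∈ D.shortCorootKernel)
    (h : D.SameComponent γ β) : β ∈ D.shortCorootKernel := by
  induction h with
  | refl => exact hγ
  | tail _ hbc ih =>
    exact D.root_mem_shortCorootKernel hbc.2.1 ih
      ((D.coroot_apply_eq_zero_iff hbc.2.1).not.2 (by rw [D.B_symm]; exact hbc.2.2))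

lemma eq_zero_of_mem_shortCorootKernel {x : V} (hx : x ∈ D.shortCorootKernel) : x = 0 := by
  by_contra hx0
  obtain ⟨γ, hγ, hγx⟩ := D.exists_coroot_apply_ne_zero hx0
  obtain ⟨β, hβ, hγβ⟩ := D.exists_shortCoroot_sameComponent hγ
  have h := D.mem_shortCorootKernel_of_sameComponent (D.root_mem_shortCorootKernel hγ hx hγx)
    hγβ β hβ
  simp [D.coroot_self β hβ.1] at h

lemma span_shortCoroot_eq_top [FiniteDimensional ℝ V] :
    Submodule.span ℝ (D.coroot '' {α | D.ShortCoroot α}) = ⊤ := by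
  refine Submodule.span_eq_top_of_ne_zero fun x hx => ?_
  by_contra! h
  exact hx (D.eq_zero_of_mem_shortCorootKernel fun α hα => h _ ⟨α, hα, rfl⟩)

noncomputable def dualToPrimal [FiniteDimensional ℝ V] : Module.Dual ℝ V →ₗ[ℝ] V :=
  (Module.evalEquiv ℝ V).symm.toLinearMap ∘ₗ ((2 : ℝ) • D.Bd)

lemma dualToPrimal_coroot [FiniteDimensional ℝ V] {α : V} (hα : α ∈ D.roots) :
    D.dualToPrimal (D.coroot α) = D.Bd (D.coroot α) (D.coroot α) • α := by
  have h : ((2 : ℝ) • D.Bd) (D.coroot α)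
      = D.Bd (D.coroot α) (D.coroot α) • Module.Dual.eval ℝ V α := by
    ext y
    simp [← D.apply_root_mul_Bd_coroot_self hα y, mul_comm]
  simp only [dualToPrimal, LinearMap.comp_apply, LinearEquiv.coe_coe, h, map_smul]
  rw [← Module.evalEquiv_apply, LinearEquiv.symm_apply_apply]

end RootSystemData

theorem stmt0_general {V : Type} [AddCommGroup V] [Module ℝ V] [FiniteDimensional ℝ V]
    (D : RootSystemData V)
    (hnormVd : D.NormalizedDual) :
    ∃! φ : Module.Dual ℝ V →ₗ[ℝ] V,
      ∀ α, D.ShortCoroot α → φ (D.coroot α) = α := by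
  have hφ : ∀ α, D.ShortCoroot α → D.dualToPrimal (D.coroot α) = α := fun α hα => by
    rw [D.dualToPrimal_coroot hα.1, hnormVd α hα, one_smul]
  refine ⟨D.dualToPrimal, hφ, fun ψ hψ => LinearMap.ext_on D.span_shortCoroot_eq_top ?_⟩
  rintro _ ⟨α, hα, rfl⟩
  rw [hψ α hα, hφ α hα]

/-- For a reduced root system `R` in `V` with the normalized
`Aut(R)`-invariant inner products, there is a unique `ℝ`-linear map
`φ : V* → V` with `φ(α∨) = α` for all short coroots `α∨`. -/
theorem stmt0 {V : Type} [AddCommGroup V] [Module ℝ V] [FiniteDimensional ℝ V]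
    (D : RootSystemData V)
    (hnormV : D.NormalizedPrimal) (hnormVd : D.NormalizedDual) :
    ∃! φ : Module.Dual ℝ V →ₗ[ℝ] V,
      ∀ α, D.ShortCoroot α → φ (D.coroot α) = α :=
  stmt0_general D hnormVd
end

section
/- For a simple coroot α∨ with corresponding fundamental dominant weight f_α∨ of the dual root system R∨, the map φ satisfies φ(f_α∨) = d_α · f_α, where f_α is the fundamental weight of R corresponding to α and d_α is the square-length of α∨. -/
open Module
open scoped Classical

/-! Pairing with a simple coroot `β∨` sends both `φ(f_α∨)` and `d_α f_α` to `d_β δ_{αβ}`, by the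
defining property of `φ` and the formula for the coroots of `R∨`. Since `B` is positive definite
and the simple roots span `V`, a vector is determined by its pairings with the simple coroots. -/

namespace RootSystemData

variable {V : Type} [AddCommGroup V] [Module ℝ V] (D : RootSystemData V)

theorem B_self_ne_zero {α : V} (hα : α ∈ D.roots) : D.B α α ≠ 0 :=
  (D.B_pos α (D.root_ne_zero α hα)).ne'

theorem Bd_coroot_self_ne_zero {α : V} (hα : α ∈ D.roots) :
    D.Bd (D.coroot α) (D.coroot α) ≠ 0 := by
  refine (D.Bd_pos _ fun h => ?_).ne'
  simpa [h] using D.coroot_self α hα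

theorem B_eq_zero_of_coroot_eq_zero {α x : V} (hα : α ∈ D.roots) (hx : D.coroot α x = 0) :
    D.B α x = 0 := by
  rw [D.coroot_eq α hα, div_eq_zero_iff] at hx
  simpa [D.B_self_ne_zero hα] using hx

theorem eq_of_forall_coroot_eq {S : Set V} (hS : S ⊆ D.roots)
    (hspan : Submodule.span ℝ S = ⊤) {x y : V}
    (h : ∀ β ∈ S, D.coroot β x = D.coroot β y) : x = y := by
  have hB : D.B.flip (x - y) = 0 :=
    LinearMap.ext_on hspan fun β hβ =>
      D.B_eq_zero_of_coroot_eq_zero (hS hβ) (by rw [map_sub, h β hβ, sub_self])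
  rw [← sub_eq_zero]
  by_contra hne
  exact (D.B_pos _ hne).ne' (LinearMap.congr_fun hB (x - y))

theorem coroot_apply_of_Bd_eq {φ : Module.Dual ℝ V →ₗ[ℝ] V}
    (hφ : ∀ x y : Module.Dual ℝ V, x (φ y) = 2 * D.Bd x y) {β : V} (hβ : β ∈ D.roots)
    (y : Module.Dual ℝ V) :
    D.coroot β (φ y) = D.Bd (D.coroot β) (D.coroot β) * y β := by
  rw [hφ, D.dual_coroot_eq β hβ y]
  field_simp [D.Bd_coroot_self_ne_zero hβ]

end RootSystemData

theorem stmt5_general {V : Type} [AddCommGroup V] [Module ℝ V]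
    (D : RootSystemData V)
    (φ : Module.Dual ℝ V →ₗ[ℝ] V)
    (hφ : ∀ x y : Module.Dual ℝ V, x (φ y) = 2 * D.Bd x y)
    -- a system of simple roots `Π`
    (Pi : Finset V) (hPi : ∀ α ∈ Pi, α ∈ D.roots)
    (hspan : Submodule.span ℝ (Pi : Set V) = ⊤)
    -- the fundamental weights of `R`: `⟨f_α, β∨⟩ = δ_{αβ}` for simple roots `β`
    (fw : V → V)
    (hfw : ∀ α ∈ Pi, ∀ β ∈ Pi, D.coroot β (fw α) = if α = β then 1 else 0)
    -- the fundamental weights of `R∨`: `⟨f_α∨, β⟩ = δ_{αβ}` for simple roots `β`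
    (fcw : V → Module.Dual ℝ V)
    (hfcw : ∀ α ∈ Pi, ∀ β ∈ Pi, fcw α β = if α = β then 1 else 0) :
    ∀ α ∈ Pi, φ (fcw α) = D.Bd (D.coroot α) (D.coroot α) • fw α := by
  intro α hα
  refine D.eq_of_forall_coroot_eq hPi hspan fun β hβ => ?_
  rw [D.coroot_apply_of_Bd_eq hφ (hPi β hβ), map_smul, smul_eq_mul, hfcw α hα β hβ,
    hfw α hα β hβ]
  split_ifs with hαβ
  · rw [hαβ]
  · simp

/-- For a simple root `α` with fundamental weight `f_α` of `R` and
fundamental dominant weight `f_α∨` of `R∨`, the map `φ` satisfies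
`φ(f_α∨) = d_α • f_α`, where `d_α` is the square-length of `α∨`. -/
theorem stmt5 {V : Type} [AddCommGroup V] [Module ℝ V] [FiniteDimensional ℝ V]
    (D : RootSystemData V)
    (hnormV : D.NormalizedPrimal) (hnormVd : D.NormalizedDual)
    (φ : Module.Dual ℝ V →ₗ[ℝ] V)
    (hφ : ∀ x y : Module.Dual ℝ V, x (φ y) = 2 * D.Bd x y)
    -- a system of simple roots `Π`
    (Pi : Finset V) (hPi : ∀ α ∈ Pi, α ∈ D.roots)
    (hlin : LinearIndependent ℝ (fun a : {x // x ∈ Pi} => (a : V)))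
    (hspan : Submodule.span ℝ (Pi : Set V) = ⊤)
    -- the fundamental weights of `R`: `⟨f_α, β∨⟩ = δ_{αβ}` for simple roots `β`
    (fw : V → V)
    (hfw : ∀ α ∈ Pi, ∀ β ∈ Pi, D.coroot β (fw α) = if α = β then 1 else 0)
    -- the fundamental weights of `R∨`: `⟨f_α∨, β⟩ = δ_{αβ}` for simple roots `β`
    (fcw : V → Module.Dual ℝ V)
    (hfcw : ∀ α ∈ Pi, ∀ β ∈ Pi, fcw α β = if α = β then 1 else 0) :
    ∀ α ∈ Pi, φ (fcw α) = D.Bd (D.coroot α) (D.coroot α) • fw α :=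
  stmt5_general D φ hφ Pi hPi hspan fw hfw fcw hfcw
end
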